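/- Let E be a finite-dimensional real normed vector space and let 𝒜 : E → E be a bijective affine map. Define the dimension code D(S) of a set S ⊆ E by D(S) = F (a distinguished symbol, e.g. the value 'none') if S = ∅, and otherwise D(S) = the finrank over ℝ of the direction of the affine span of S. Then for all sets g₁, g₂ ⊆ E and for every choice of operators F₁, F₂, each being one of: the topological interior, the frontier (topological boundary), or the exterior (complement of the closure), the nine-intersection entries are preserved: D( F₁(𝒜(g₁)) ∩ F₂(𝒜(g₂)) ) = D( F₁(g₁) ∩ F₂(g₂) ). In particular, the topological relationship matrix built from interiors, boundaries and exteriors is invariant under applying the same affine equivalence to both geometries. -/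

import Mathlib

/-!
An affine equivalence of a finite-dimensional normed space is a homeomorphism, so taking images
under it commutes with interior, frontier and exterior, and (being injective) with intersections.
Its linear part maps the direction of the affine span of `S` isomorphically onto the direction of
the affine span of the image, so the dimension code is invariant.
-/

open Classical

/-- The paper's `D`, with `none` standing for its symbol `F`. -/
noncomputable def dimCode (k : Type*) {V P : Type*} [Ring k] [AddCommGroup V] [Module k V]
    [AddTorsor V P] (S : Set P) : Option ℕ :=
  if S = ∅ then none else some (Module.finrank k (affineSpan k S).direction)

section Affine

variable {k V₁ V₂ P₁ P₂ : Type*} [Ring k] [AddCommGroup V₁] [Module k V₁] [AddTorsor V₁ P₁]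
  [AddCommGroup V₂] [Module k V₂] [AddTorsor V₂ P₂]

theorem AffineEquiv.finrank_direction_affineSpan_image (e : P₁ ≃ᵃ[k] P₂) (s : Set P₁) :
    Module.finrank k (affineSpan k (e '' s)).direction =
      Module.finrank k (affineSpan k s).direction := by
  rw [← e.coe_toAffineMap, ← AffineSubspace.map_span, AffineSubspace.map_direction]
  exact e.linear.finrank_map_eq _

theorem AffineEquiv.dimCode_image (e : P₁ ≃ᵃ[k] P₂) (s : Set P₁) :
    dimCode k (e '' s) = dimCode k s := by
  simp only [dimCode, Set.image_eq_empty, e.finrank_direction_affineSpan_image]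

end Affine

theorem Homeomorph.image_compl_closure {X Y : Type*} [TopologicalSpace X] [TopologicalSpace Y]
    (h : X ≃ₜ Y) (s : Set X) : h '' (closure s)ᶜ = (closure (h '' s))ᶜ := by
  rw [h.image_compl, h.image_closure]

theorem Homeomorph.image_comm_of_interior_or_frontier_or_exterior {X : Type*}
    [TopologicalSpace X] (h : X ≃ₜ X) {F : Set X → Set X}
    (hF : F = interior ∨ F = frontier ∨ F = fun S : Set X => (closure S)ᶜ) (s : Set X) :
    F (h '' s) = h '' F s := by
  rcases hF with rfl | rfl | rfl
  · exact (h.image_interior s).symm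
  · exact (h.image_frontier s).symm
  · exact (h.image_compl_closure s).symm

/-- Let `E` be a finite-dimensional real normed vector space, `𝒜 : E → E` a
bijective affine map, and `D` the dimension code assigning `none` (the symbol `F`) to the empty
set and otherwise the finrank over `ℝ` of the direction of the affine span. Then for all sets
`g₁ g₂ ⊆ E` and all operators `F₁, F₂`, each of which is the interior, the frontier, or the
exterior (complement of the closure), the nine-intersection entries are preserved:
`D (F₁ (𝒜 '' g₁) ∩ F₂ (𝒜 '' g₂)) = D (F₁ g₁ ∩ F₂ g₂)`. -/
theorem stmt_5 {E : Type*} [NormedAddCommGroup E] [NormedSpace ℝ E] [FiniteDimensional ℝ E]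
    (𝒜 : E →ᵃ[ℝ] E) (h𝒜 : Function.Bijective 𝒜)
    (D : Set E → Option ℕ)
    (hD : ∀ S : Set E,
      D S = if S = ∅ then none else some (Module.finrank ℝ (affineSpan ℝ S).direction))
    (g₁ g₂ : Set E) (F₁ F₂ : Set E → Set E)
    (hF₁ : F₁ = interior ∨ F₁ = frontier ∨ F₁ = fun S : Set E => (closure S)ᶜ)
    (hF₂ : F₂ = interior ∨ F₂ = frontier ∨ F₂ = fun S : Set E => (closure S)ᶜ) :
    D (F₁ (𝒜 '' g₁) ∩ F₂ (𝒜 '' g₂)) = D (F₁ g₁ ∩ F₂ g₂) := by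
  obtain rfl : D = dimCode ℝ := funext hD
  let e : E ≃ᵃ[ℝ] E := AffineEquiv.ofBijective h𝒜
  let h : E ≃ₜ E := e.toContinuousAffineEquiv.toHomeomorph
  change dimCode ℝ (F₁ (h '' g₁) ∩ F₂ (h '' g₂)) = _
  rw [h.image_comm_of_interior_or_frontier_or_exterior hF₁,
    h.image_comm_of_interior_or_frontier_or_exterior hF₂, ← Set.image_inter h.injective]
  exact e.dimCode_image _
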